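/- Let K ⊆ ℝⁿ be a nonempty closed set, f = (f_1,…,f_q) a vector polynomial, x̄ ∈ K, and λ ∈ ℝ^q with λ_i ≥ 0 for all i and λ ≠ 0. Then the sublevel set K_x̄ is bounded if and only if there exists a nonempty closed set S ⊆ ℝⁿ with (K_x̄)_∞ ⊆ S_∞ ⊆ K_∞ such that at least one of the following holds: (i) SOL(S_∞, (Σ_{i=1}^q λ_i f_i)^∞) = {0}; (ii) SOL^s(S_∞, f^∞) = {0}; (iii) SOL^w(S_∞, f^∞) = {0}. -/

import Mathlib

open Filter Topology MvPolynomial Bornology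

noncomputable section

/-- The asymptotic (recession) cone of a set `A ⊆ ℝⁿ`. -/
def asymCone {n : ℕ} (A : Set (Fin n → ℝ)) : Set (Fin n → ℝ) :=
  {v | ∃ (t : ℕ → ℝ) (x : ℕ → (Fin n → ℝ)),
    Filter.Tendsto t Filter.atTop Filter.atTop ∧ (∀ k, x k ∈ A) ∧
    Filter.Tendsto (fun k => (t k)⁻¹ • x k) Filter.atTop (nhds v)}

/-- Pareto efficient solutions of the vector map `g` on `C`. -/
def SOLs {n q : ℕ} (C : Set (Fin n → ℝ)) (g : Fin q → (Fin n → ℝ) → ℝ) :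
    Set (Fin n → ℝ) :=
  {x | x ∈ C ∧ ¬ ∃ y ∈ C, (∀ i, g i y ≤ g i x) ∧ (∃ i, g i y ≠ g i x)}

/-- Weak Pareto efficient solutions of the vector map `g` on `C`. -/
def SOLw {n q : ℕ} (C : Set (Fin n → ℝ)) (g : Fin q → (Fin n → ℝ) → ℝ) :
    Set (Fin n → ℝ) :=
  {x | x ∈ C ∧ ¬ ∃ y ∈ C, ∀ i, g i y < g i x}

/-- Global minimizers of a scalar function `p` on `C`. -/
def SOLmin {n : ℕ} (C : Set (Fin n → ℝ)) (p : (Fin n → ℝ) → ℝ) :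
    Set (Fin n → ℝ) :=
  {x | x ∈ C ∧ ∀ y ∈ C, p x ≤ p y}

/-- The recession polynomial (leading term: top-degree homogeneous part) of a
polynomial, as a function on `ℝⁿ`. -/
noncomputable def recPoly {n : ℕ} (p : MvPolynomial (Fin n) ℝ) : (Fin n → ℝ) → ℝ :=
  fun x => MvPolynomial.eval x (MvPolynomial.homogeneousComponent p.totalDegree p)

/-! If `K_x̄` is bounded, take `S = K_x̄`: its asymptotic cone is `{0}`. Conversely, an unbounded
`K_x̄` has a unit asymptotic direction `v`. Every `f_i`, and every `∑ λ_i f_i` with `λ ≥ 0`, is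
bounded above on `K_x̄`; dividing by `t ^ deg` along a sequence realizing `v` gives
`f_i^∞(v) ≤ f_i^∞(0)` and `(∑ λ_i f_i)^∞(v) ≤ (∑ λ_i f_i)^∞(0)`. So `v ∈ S_∞` is at least as good
as `0` for each of the three problems, and is a solution as soon as `0` is; uniqueness forces
`v = 0`. -/

lemma MvPolynomial.IsHomogeneous.eval_smul {σ R : Type*} [CommSemiring R]
    {p : MvPolynomial σ R} {m : ℕ} (hp : p.IsHomogeneous m) (c : R) (y : σ → R) :
    eval (c • y) p = c ^ m * eval y p := by
  rw [eval_eq, eval_eq, Finset.mul_sum]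
  refine Finset.sum_congr rfl fun d hd => ?_
  have hdeg : ∑ i ∈ d.support, d i = m := by
    have hweight : Finsupp.degree d = Finsupp.weight 1 d :=
      DFunLike.congr_fun Finsupp.degree_eq_weight_one d
    rw [← hp (mem_support_iff.mp hd), ← hweight, Finsupp.degree_apply]
  simp only [Pi.smul_apply, smul_eq_mul, mul_pow, Finset.prod_mul_distrib,
    Finset.prod_pow_eq_pow_sum, hdeg]
  ring

section Solutions

variable {n q : ℕ} {C : Set (Fin n → ℝ)} {x y : Fin n → ℝ}

lemma SOLmin_singleton (p : (Fin n → ℝ) → ℝ) : SOLmin {x} p = {x} := by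
  ext z
  simp only [SOLmin, Set.mem_ofPred_eq, Set.mem_singleton_iff, forall_eq, and_iff_left_iff_imp]
  rintro rfl
  exact le_rfl

lemma mem_SOLmin_of_le {p : (Fin n → ℝ) → ℝ} (hx : x ∈ SOLmin C p) (hy : y ∈ C)
    (hle : p y ≤ p x) : y ∈ SOLmin C p :=
  ⟨hy, fun z hz => hle.trans (hx.2 z hz)⟩

lemma mem_SOLs_of_le {g : Fin q → (Fin n → ℝ) → ℝ} (hx : x ∈ SOLs C g) (hy : y ∈ C)
    (hle : ∀ i, g i y ≤ g i x) : y ∈ SOLs C g := by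
  have heq : ∀ i, g i y = g i x := by
    by_contra! ⟨i, hi⟩
    exact hx.2 ⟨y, hy, hle, i, hi⟩
  refine ⟨hy, fun ⟨z, hz, hzle, i, hi⟩ => hx.2 ⟨z, hz, fun j => ?_, i, ?_⟩⟩
  · exact heq j ▸ hzle j
  · exact heq i ▸ hi

lemma mem_SOLw_of_le {g : Fin q → (Fin n → ℝ) → ℝ} (hx : x ∈ SOLw C g) (hy : y ∈ C)
    (hle : ∀ i, g i y ≤ g i x) : y ∈ SOLw C g :=
  ⟨hy, fun ⟨z, hz, hlt⟩ => hx.2 ⟨z, hz, fun i => (hlt i).trans_le (hle i)⟩⟩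

end Solutions

section AsymptoticCone

variable {n : ℕ} {A B : Set (Fin n → ℝ)}

lemma asymCone_mono (h : A ⊆ B) : asymCone A ⊆ asymCone B := by
  rintro v ⟨t, x, ht, hx, hv⟩
  exact ⟨t, x, ht, fun k => h (hx k), hv⟩

lemma asymCone_eq_singleton_zero (hne : A.Nonempty) (hb : IsBounded A) :
    asymCone A = {0} := by
  refine Set.eq_singleton_iff_unique_mem.mpr ⟨?_, ?_⟩
  · obtain ⟨a, ha⟩ := hne
    refine ⟨fun k => k, fun _ => a, tendsto_natCast_atTop_atTop, fun _ => ha, ?_⟩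
    simpa using (tendsto_inv_atTop_zero (𝕜 := ℝ)).comp tendsto_natCast_atTop_atTop |>.smul_const a
  · rintro v ⟨t, x, ht, hx, hv⟩
    obtain ⟨R, hR⟩ := isBounded_iff_forall_norm_le.mp hb
    have hbound : ∀ᶠ k in atTop, ‖(t k)⁻¹ • x k‖ ≤ (t k)⁻¹ * R := by
      filter_upwards [ht.eventually_gt_atTop 0] with k hk
      rw [norm_smul, Real.norm_of_nonneg (by positivity)]
      exact mul_le_mul_of_nonneg_left (hR _ (hx k)) (by positivity)
    have hlim : Tendsto (fun k => (t k)⁻¹ * R) atTop (𝓝 0) := by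
      simpa using ht.inv_tendsto_atTop.mul_const R
    exact tendsto_nhds_unique hv (squeeze_zero_norm' hbound hlim)

lemma exists_norm_eq_one_mem_asymCone (h : ¬ IsBounded A) : ∃ v ∈ asymCone A, ‖v‖ = 1 := by
  have hlarge : ∀ k : ℕ, ∃ x ∈ A, (k : ℝ) < ‖x‖ := by
    by_contra! ⟨k, hk⟩
    exact h (isBounded_iff_forall_norm_le.mpr ⟨k, hk⟩)
  choose x hxA hxk using hlarge
  have hpos : ∀ k, 0 < ‖x k‖ := fun k => (Nat.cast_nonneg k).trans_lt (hxk k)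
  have hsphere : ∀ k, ‖x k‖⁻¹ • x k ∈ Metric.sphere (0 : Fin n → ℝ) 1 := fun k => by
    rw [mem_sphere_zero_iff_norm, norm_smul, norm_inv, norm_norm, inv_mul_cancel₀ (hpos k).ne']
  obtain ⟨v, hv, φ, hφ, hconv⟩ := tendsto_subseq_of_bounded Metric.isBounded_sphere hsphere
  rw [Metric.isClosed_sphere.closure_eq, mem_sphere_zero_iff_norm] at hv
  refine ⟨v, ⟨fun k => ‖x (φ k)‖, fun k => x (φ k), ?_, fun k => hxA _, hconv⟩, hv⟩
  refine tendsto_atTop_mono (fun k => ?_) tendsto_natCast_atTop_atTop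
  calc (k : ℝ) ≤ φ k := by exact_mod_cast hφ.le_apply
    _ ≤ ‖x (φ k)‖ := (hxk (φ k)).le

lemma isBounded_of_asymCone_subset_singleton_zero (h : asymCone A ⊆ {0}) : IsBounded A := by
  by_contra hb
  obtain ⟨v, hv, hv1⟩ := exists_norm_eq_one_mem_asymCone hb
  simp [Set.mem_singleton_iff.mp (h hv)] at hv1

end AsymptoticCone

section RecessionPolynomial

variable {n : ℕ} {t : ℕ → ℝ} {x : ℕ → (Fin n → ℝ)} {v : Fin n → ℝ}

/-- Writing `x k = t k • y k`, the degree-`e` component of `p` contributes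
`t k ^ e * eval (y k) _`, so after division by `t k ^ d` only the top component survives. -/
lemma tendsto_eval_div_pow_totalDegree (p : MvPolynomial (Fin n) ℝ) (ht : Tendsto t atTop atTop)
    (hx : Tendsto (fun k => (t k)⁻¹ • x k) atTop (𝓝 v)) :
    Tendsto (fun k => eval (x k) p / t k ^ p.totalDegree) atTop (𝓝 (recPoly p v)) := by
  set d := p.totalDegree with hd
  have hcomp : ∀ e, Tendsto (fun k => eval ((t k)⁻¹ • x k) (homogeneousComponent e p)) atTop
      (𝓝 (eval v (homogeneousComponent e p))) := fun e =>
    ((continuous_eval _).tendsto v).comp hx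
  have hlow : ∀ e ∈ Finset.range d, Tendsto (fun k => eval ((t k)⁻¹ • x k)
      (homogeneousComponent e p) / t k ^ (d - e)) atTop (𝓝 0) := fun e he =>
    (hcomp e).div_atTop <| (tendsto_pow_atTop (by simp at he; omega)).comp ht
  have hlim := (tendsto_finsetSum _ hlow).add (hcomp d)
  rw [Finset.sum_const_zero, zero_add] at hlim
  refine hlim.congr' ?_
  filter_upwards [ht.eventually_gt_atTop 0] with k hk
  have hxk : x k = t k • (t k)⁻¹ • x k := by rw [smul_inv_smul₀ hk.ne']
  generalize (t k)⁻¹ • x k = y at hxk ⊢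
  rw [hxk]
  conv_rhs => rw [← sum_homogeneousComponent p, map_sum, Finset.sum_div, Finset.sum_range_succ]
  rw [← hd]
  simp only [(homogeneousComponent_isHomogeneous _ p).eval_smul]
  congr 1
  · refine Finset.sum_congr rfl fun e he => ?_
    rw [← pow_mul_pow_sub (t k) (Finset.mem_range.mp he).le]
    field_simp
  · field_simp

lemma recPoly_le_recPoly_zero_of_mem_asymCone {A : Set (Fin n → ℝ)}
    {p : MvPolynomial (Fin n) ℝ} {c : ℝ} (hA : ∀ x ∈ A, eval x p ≤ c) (hv : v ∈ asymCone A) :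
    recPoly p v ≤ recPoly p 0 := by
  obtain ⟨t, x, ht, hxA, hxv⟩ := hv
  rcases Nat.eq_zero_or_pos p.totalDegree with hd | hd
  · simp [recPoly, hd, homogeneousComponent_zero]
  have hzero : recPoly p 0 = 0 := by
    rw [recPoly]
    simpa [zero_pow hd.ne'] using
      (homogeneousComponent_isHomogeneous p.totalDegree p).eval_smul 0 0
  rw [hzero]
  have htd := (tendsto_pow_atTop hd.ne').comp ht
  refine le_of_tendsto_of_tendsto (tendsto_eval_div_pow_totalDegree p ht hxv)
    (tendsto_const_nhds (x := c) |>.div_atTop htd) ?_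
  filter_upwards [htd.eventually_gt_atTop 0] with k hk
  exact div_le_div_of_nonneg_right (hA _ (hxA k)) hk.le

end RecessionPolynomial

theorem stmt12_general {n q : ℕ} (K : Set (Fin n → ℝ)) (hKcl : IsClosed K)
    (f : Fin q → MvPolynomial (Fin n) ℝ)
    (xbar : Fin n → ℝ) (hx : xbar ∈ K)
    (lam : Fin q → ℝ) (hlam : ∀ i, 0 ≤ lam i) :
    Bornology.IsBounded {x ∈ K | ∀ j, eval x (f j) ≤ eval xbar (f j)} ↔
      ∃ S : Set (Fin n → ℝ), S.Nonempty ∧ IsClosed S ∧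
        asymCone {x ∈ K | ∀ j, eval x (f j) ≤ eval xbar (f j)} ⊆ asymCone S ∧
        asymCone S ⊆ asymCone K ∧
        (SOLmin (asymCone S) (recPoly (∑ i, MvPolynomial.C (lam i) * f i)) = {0} ∨
         SOLs (asymCone S) (fun i => recPoly (f i)) = {0} ∨
         SOLw (asymCone S) (fun i => recPoly (f i)) = {0}) := by
  set A := {x ∈ K | ∀ j, eval x (f j) ≤ eval xbar (f j)}
  have hAne : A.Nonempty := ⟨xbar, hx, fun _ => le_rfl⟩
  constructor
  · intro hb
    have hAcl : IsClosed A := by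
      refine hKcl.inter ?_
      change IsClosed {x | ∀ j, eval x (f j) ≤ eval xbar (f j)}
      rw [Set.ofPred_forall]
      exact isClosed_iInter fun j => isClosed_le (continuous_eval (f j)) continuous_const
    refine ⟨A, hAne, hAcl, subset_rfl, asymCone_mono fun _ hx => hx.1, Or.inl ?_⟩
    rw [asymCone_eq_singleton_zero hAne hb, SOLmin_singleton]
  rintro ⟨S, -, -, hAS, -, hsol⟩
  refine isBounded_of_asymCone_subset_singleton_zero fun v hv => ?_
  have hf : ∀ i, recPoly (f i) v ≤ recPoly (f i) 0 := fun i =>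
    recPoly_le_recPoly_zero_of_mem_asymCone (fun x hx => hx.2 i) hv
  have h0 {T : Set (Fin n → ℝ)} (hT : T = {0}) : (0 : Fin n → ℝ) ∈ T := hT ▸ rfl
  rcases hsol with h | h | h
  · have hp : recPoly (∑ i, C (lam i) * f i) v ≤ recPoly (∑ i, C (lam i) * f i) 0 :=
      recPoly_le_recPoly_zero_of_mem_asymCone (fun x hx => by
        simp only [map_sum, map_mul, eval_C]
        exact Finset.sum_le_sum fun i _ => mul_le_mul_of_nonneg_left (hx.2 i) (hlam i)) hv
    exact h ▸ mem_SOLmin_of_le (h0 h) (hAS hv) hp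
  · exact h ▸ mem_SOLs_of_le (h0 h) (hAS hv) hf
  · exact h ▸ mem_SOLw_of_le (h0 h) (hAS hv) hf

theorem stmt12 {n q : ℕ} (K : Set (Fin n → ℝ)) (hKne : K.Nonempty) (hKcl : IsClosed K)
    (f : Fin q → MvPolynomial (Fin n) ℝ) (hdeg : ∀ i, 1 ≤ (f i).totalDegree)
    (xbar : Fin n → ℝ) (hx : xbar ∈ K)
    (lam : Fin q → ℝ) (hlam : ∀ i, 0 ≤ lam i) (hlam0 : lam ≠ 0) :
    Bornology.IsBounded {x ∈ K | ∀ j, eval x (f j) ≤ eval xbar (f j)} ↔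
      ∃ S : Set (Fin n → ℝ), S.Nonempty ∧ IsClosed S ∧
        asymCone {x ∈ K | ∀ j, eval x (f j) ≤ eval xbar (f j)} ⊆ asymCone S ∧
        asymCone S ⊆ asymCone K ∧
        (SOLmin (asymCone S) (recPoly (∑ i, MvPolynomial.C (lam i) * f i)) = {0} ∨
         SOLs (asymCone S) (fun i => recPoly (f i)) = {0} ∨
         SOLw (asymCone S) (fun i => recPoly (f i)) = {0}) :=
  stmt12_general K hKcl f xbar hx lam hlam
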